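/- For any b ≠ 0 and c ∈ ℝ, the function u(y) = log(sinh(b(y+c))/b) satisfies u'' + e^{-2u} = 0 on the set where sinh(b(y+c))/b > 0. -/

import Mathlib

theorem sinh_log_satisfies_ode (b c : ℝ) (hb : b ≠ 0) :
    ∀ y : ℝ, 0 < Real.sinh (b * (y + c)) / b →
      deriv (deriv (fun t => Real.log (Real.sinh (b * (t + c)) / b))) y
        + Real.exp (-2 * Real.log (Real.sinh (b * (y + c)) / b)) = 0 := by
  intro y hy
  have hinner : ∀ t : ℝ, HasDerivAt (fun t : ℝ => b * (t + c)) b t := by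
    intro t
    simpa using ((hasDerivAt_id t).add_const c).const_mul b
  have hsder : ∀ t : ℝ, HasDerivAt (fun t => Real.sinh (b * (t + c)))
      (Real.cosh (b * (t + c)) * b) t := by
    intro t
    exact (Real.hasDerivAt_sinh _).comp t (hinner t)
  have hu : ∀ t : ℝ, Real.sinh (b * (t + c)) ≠ 0 →
      HasDerivAt (fun t => Real.log (Real.sinh (b * (t + c)) / b))
        (b * Real.cosh (b * (t + c)) / Real.sinh (b * (t + c))) t := by
    intro t ht
    have hdiv : HasDerivAt (fun t => Real.sinh (b * (t + c)) / b)
        (Real.cosh (b * (t + c)) * b / b) t := (hsder t).div_const b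
    have hne : Real.sinh (b * (t + c)) / b ≠ 0 := div_ne_zero ht hb
    have := hdiv.log hne
    convert this using 1
    field_simp
  have hopen : IsOpen {t : ℝ | 0 < Real.sinh (b * (t + c)) / b} := by
    have hc : Continuous fun t : ℝ => Real.sinh (b * (t + c)) / b :=
      (Real.continuous_sinh.comp (by continuity)).div_const b
    exact isOpen_lt continuous_const hc
  have hymem : y ∈ {t : ℝ | 0 < Real.sinh (b * (t + c)) / b} := hy
  have hsy : Real.sinh (b * (y + c)) ≠ 0 := (div_ne_zero_iff.mp (ne_of_gt hy)).1
  have hev : deriv (fun t => Real.log (Real.sinh (b * (t + c)) / b))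
      =ᶠ[nhds y] fun t => b * Real.cosh (b * (t + c)) / Real.sinh (b * (t + c)) := by
    filter_upwards [hopen.mem_nhds hymem] with t ht
    have hst : Real.sinh (b * (t + c)) ≠ 0 := (div_ne_zero_iff.mp (ne_of_gt ht)).1
    exact (hu t hst).deriv
  have hd2 : deriv (deriv (fun t => Real.log (Real.sinh (b * (t + c)) / b))) y
      = deriv (fun t => b * Real.cosh (b * (t + c)) / Real.sinh (b * (t + c))) y :=
    hev.deriv_eq
  have hnum : HasDerivAt (fun t => b * Real.cosh (b * (t + c)))
      (b * (Real.sinh (b * (y + c)) * b)) y :=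
    ((Real.hasDerivAt_cosh _).comp y (hinner y)).const_mul b
  have hg : HasDerivAt (fun t => b * Real.cosh (b * (t + c)) / Real.sinh (b * (t + c)))
      ((b * (Real.sinh (b * (y + c)) * b) * Real.sinh (b * (y + c)) -
        b * Real.cosh (b * (y + c)) * (Real.cosh (b * (y + c)) * b)) /
          (Real.sinh (b * (y + c))) ^ 2) y :=
    hnum.div (hsder y) hsy
  rw [hd2, hg.deriv]
  have hexp : Real.exp (-2 * Real.log (Real.sinh (b * (y + c)) / b))
      = b ^ 2 / (Real.sinh (b * (y + c))) ^ 2 := by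
    rw [show (-2 : ℝ) * Real.log (Real.sinh (b * (y + c)) / b)
        = Real.log ((Real.sinh (b * (y + c)) / b) ^ (-2 : ℤ)) by
      rw [Real.log_zpow]; push_cast; ring]
    rw [Real.exp_log (by positivity), zpow_neg, zpow_two]
    field_simp
  rw [hexp]
  have hid : Real.cosh (b * (y + c)) ^ 2 - Real.sinh (b * (y + c)) ^ 2 = 1 :=
    Real.cosh_sq_sub_sinh_sq _
  field_simp
  nlinarith [hid]
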